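/- arXiv:1703.01535 — 3 statements merged into one kernel-verified Lean document; each statement's English description precedes it below -/
import Mathlib

section
/- Let n ≥ 1, let 1 < p < ∞ with q = p/(p−1), and let f be n-times differentiable on an open interval containing [a,b] with f^(n) absolutely continuous on [a,b] and f^(n) ∈ L^p[a,b]. Then for every x ∈ [a,(a+b)/2], | (1/n)·( (f(x)+f(a+b−x))/2 + Σ_{k=1}^{n−1} G_k(x) ) − (1/(b−a))·∫_a^b f(y) dy | ≤ (2^{1/q}/(n!·(b−a)))·( (x−a)^{nq+1} + ((a+b)/2 − x)^{nq+1} )^{1/q} · B((n−1)q+1, q+1)^{1/q} · ‖f^(n)‖_{L^p[a,b]}. -/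
open MeasureTheory Set

/-- The Guessab–Schmeisser / Fink-type kernel `S(t,x)` on `[a,b]`. -/
noncomputable def Skernel (a b x t : ℝ) : ℝ :=
  if t ≤ x then t - a else if t < a + b - x then t - (a + b) / 2 else t - b

/-- `g` is absolutely continuous on `[a,b]`. -/
def AbsCont (g : ℝ → ℝ) (a b : ℝ) : Prop :=
  ∃ h : ℝ → ℝ, IntervalIntegrable h MeasureTheory.volume a b ∧
    ∀ t ∈ Set.Icc a b, g t = g a + ∫ s in a..t, h s

/-- The term `G_k(x)` from the Guessab–Schmeisser expansion. -/
noncomputable def Gterm (f : ℝ → ℝ) (n : ℕ) (a b x : ℝ) (k : ℕ) : ℝ :=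
  (((n : ℝ) - k) / ((k.factorial : ℝ) * (b - a))) *
    ((x - a) ^ k *
        (iteratedDeriv (k - 1) f a + (-1 : ℝ) ^ (k + 1) * iteratedDeriv (k - 1) f b)
      + (1 + (-1 : ℝ) ^ (k + 1)) * ((a + b) / 2 - x) ^ k *
          iteratedDeriv (k - 1) f ((a + b) / 2))

/-- The real Euler Beta function, as an integral. -/
noncomputable def betaR (u v : ℝ) : ℝ :=
  ∫ s in (0 : ℝ)..1, s ^ (u - 1) * (1 - s) ^ (v - 1)

/-!
Integrating by parts against `(z - t)^m (t - α)`, and using the closed form of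
`∫ (z - t)^k f^(k)`, gives a one-sided Fink identity on `[α, z]`; two of them glued at `z`
give Fink's identity on `[α, β]`. Applied on `[a, (a+b)/2]` at `x` and on `[(a+b)/2, b]` at
`a + b - x`, it writes `n! (b - a)` times the left-hand side as `∫ K f^(n)` for an explicit
kernel `K`, and Hölder's inequality bounds this by `‖K‖_q ‖f^(n)‖_p`. On each of the four
intervals where `K` is a polynomial, `|K|^q = |t - α|^r |β - t|^s` integrates to
`(β - α)^(r+s+1) B(r+1, s+1)`; the reflection `x ↦ a + b - x` makes the four pieces pair up,
which produces the factor `2`.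
-/

open intervalIntegral
open scoped Nat Interval

section Regularity

variable {f : ℝ → ℝ} {s : Set ℝ} {n k : ℕ}

theorem ContDiffOn.hasDerivAt_iteratedDeriv (hf : ContDiffOn ℝ n f s) (hs : IsOpen s)
    (hk : k < n) {t : ℝ} (ht : t ∈ s) :
    HasDerivAt (iteratedDeriv k f) (iteratedDeriv (k + 1) f t) t := by
  have hd : DifferentiableOn ℝ (iteratedDeriv k f) s :=
    (hf.differentiableOn_iteratedDerivWithin (by exact_mod_cast hk) hs.uniqueDiffOn).congr
      fun u hu => (iteratedDerivWithin_of_isOpen hs hu).symm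
  rw [iteratedDeriv_succ]
  exact (hd.differentiableAt (hs.mem_nhds ht)).hasDerivAt

theorem ContDiffOn.continuousOn_iteratedDeriv (hf : ContDiffOn ℝ n f s) (hs : IsOpen s)
    (hk : k ≤ n) : ContinuousOn (iteratedDeriv k f) s :=
  (hf.continuousOn_iteratedDerivWithin (by exact_mod_cast hk) hs.uniqueDiffOn).congr
    fun u hu => (iteratedDerivWithin_of_isOpen hs hu).symm

end Regularity

section Piecewise

variable {E : Type*} [NormedAddCommGroup E] {μ : Measure ℝ}
  {F G : ℝ → E} {α β z : ℝ}

theorem intervalIntegrable_ite_le (hz : z ∈ Icc α β) (hF : IntervalIntegrable F μ α z)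
    (hG : IntervalIntegrable G μ z β) :
    IntervalIntegrable (fun t => if t ≤ z then F t else G t) μ α β := by
  have hleft : EqOn F (fun t => if t ≤ z then F t else G t) (Ι α z) := fun t ht =>
    (if_pos (by rw [uIoc_of_le hz.1] at ht; exact ht.2)).symm
  have hright : EqOn G (fun t => if t ≤ z then F t else G t) (Ι z β) := fun t ht =>
    (if_neg (by rw [uIoc_of_le hz.2] at ht; exact not_le.mpr ht.1)).symm
  exact (hF.congr hleft).trans (hG.congr hright)

theorem integral_ite_le [NormedSpace ℝ E] (hz : z ∈ Icc α β)
    (hF : IntervalIntegrable F μ α z) (hG : IntervalIntegrable G μ z β) :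
    ∫ t in α..β, (if t ≤ z then F t else G t) ∂μ
      = (∫ t in α..z, F t ∂μ) + ∫ t in z..β, G t ∂μ := by
  have hleft : ∀ t ∈ Ι α z, (if t ≤ z then F t else G t) = F t := fun t ht =>
    if_pos (by rw [uIoc_of_le hz.1] at ht; exact ht.2)
  have hright : ∀ t ∈ Ι z β, (if t ≤ z then F t else G t) = G t := fun t ht =>
    if_neg (by rw [uIoc_of_le hz.2] at ht; exact not_le.mpr ht.1)
  rw [← integral_add_adjacent_intervals (hF.congr fun t ht => (hleft t ht).symm)
      (hG.congr fun t ht => (hright t ht).symm),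
    integral_congr_ae (ae_of_all _ hleft), integral_congr_ae (ae_of_all _ hright)]

end Piecewise

theorem abs_intervalIntegral_mul_le_Lp_mul_Lq {p q a b : ℝ} {F G : ℝ → ℝ}
    (hpq : p.HolderConjugate q) (hab : a ≤ b)
    (hF : AEStronglyMeasurable F (volume.restrict (Ioc a b)))
    (hFp : IntervalIntegrable (fun t => |F t| ^ p) volume a b)
    (hG : AEStronglyMeasurable G (volume.restrict (Ioc a b)))
    (hGq : IntervalIntegrable (fun t => |G t| ^ q) volume a b) :
    |∫ t in a..b, F t * G t|
      ≤ (∫ t in a..b, |F t| ^ p) ^ (1 / p) * (∫ t in a..b, |G t| ^ q) ^ (1 / q) := by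
  have memLp : ∀ {r : ℝ} {H : ℝ → ℝ}, 0 < r →
      AEStronglyMeasurable H (volume.restrict (Ioc a b)) →
      IntervalIntegrable (fun t => |H t| ^ r) volume a b →
      MemLp H (ENNReal.ofReal r) (volume.restrict (Ioc a b)) := fun hr hH hHr =>
    (integrable_norm_rpow_iff hH (by simpa using hr) ENNReal.ofReal_ne_top).mp
      (by simpa [ENNReal.toReal_ofReal hr.le, IntegrableOn] using
        (intervalIntegrable_iff_integrableOn_Ioc_of_le hab).mp hHr)
  simp only [intervalIntegral.integral_of_le hab]
  calc |∫ t in Ioc a b, F t * G t| ≤ ∫ t in Ioc a b, ‖F t‖ * ‖G t‖ := by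
        simpa only [norm_mul, Real.norm_eq_abs] using
          norm_integral_le_integral_norm (fun t => F t * G t)
    _ ≤ _ := integral_mul_norm_le_Lp_mul_Lq hpq (memLp hpq.pos hF hFp) (memLp hpq.symm.pos hG hGq)
    _ = _ := by simp only [Real.norm_eq_abs]

theorem betaR_nonneg (u v : ℝ) : 0 ≤ betaR u v :=
  intervalIntegral.integral_nonneg zero_le_one fun _ hs =>
    mul_nonneg (Real.rpow_nonneg hs.1 _) (Real.rpow_nonneg (sub_nonneg.mpr hs.2) _)

theorem betaR_comm (u v : ℝ) : betaR u v = betaR v u := by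
  unfold betaR
  have h := intervalIntegral.integral_comp_sub_left (a := 0) (b := 1)
    (fun s => s ^ (v - 1) * (1 - s) ^ (u - 1)) 1
  simp only [sub_zero, sub_self, sub_sub_cancel] at h
  rw [← h]
  exact integral_congr fun s _ => mul_comm _ _

theorem integral_abs_sub_rpow_mul_abs_sub_rpow {α β r s : ℝ} (hαβ : α ≤ β)
    (hrs : r + s + 1 ≠ 0) :
    ∫ t in α..β, |t - α| ^ r * |β - t| ^ s
      = (β - α) ^ (r + s + 1) * betaR (r + 1) (s + 1) := by
  rcases hαβ.eq_or_lt with rfl | hlt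
  · simp [Real.zero_rpow hrs]
  have hc : 0 < β - α := sub_pos.mpr hlt
  have hsub := intervalIntegral.integral_comp_mul_add (a := 0) (b := 1)
    (fun t => |t - α| ^ r * |β - t| ^ s) hc.ne' α
  simp only [mul_zero, zero_add, mul_one, sub_add_cancel, smul_eq_mul] at hsub
  rw [eq_inv_mul_iff_mul_eq₀ hc.ne'] at hsub
  rw [← hsub, betaR, add_sub_cancel_right, add_sub_cancel_right,
    ← intervalIntegral.integral_const_mul, ← intervalIntegral.integral_const_mul]
  refine integral_congr fun u hu => ?_
  rw [uIcc_of_le zero_le_one] at hu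
  rw [show (β - α) * u + α - α = (β - α) * u by ring,
    show β - ((β - α) * u + α) = (β - α) * (1 - u) by ring, abs_mul, abs_mul, abs_of_pos hc,
    abs_of_nonneg hu.1, abs_of_nonneg (sub_nonneg.mpr hu.2), Real.mul_rpow hc.le hu.1,
    Real.mul_rpow hc.le (sub_nonneg.mpr hu.2), Real.rpow_add hc, Real.rpow_add hc, Real.rpow_one]
  ring

theorem hasDerivAt_sub_pow_succ (z t : ℝ) (k : ℕ) :
    HasDerivAt (fun u => (z - u) ^ (k + 1)) (-((k + 1) * (z - t) ^ k)) t := by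
  simpa [mul_comm] using ((hasDerivAt_id t).const_sub z).fun_pow (k + 1)

noncomputable def finkSum (f : ℝ → ℝ) (m : ℕ) (α z : ℝ) : ℝ :=
  ∑ j ∈ Finset.range m, ((m : ℝ) - j) * ((z - α) ^ (j + 1) / (j + 1)! * iteratedDeriv j f α)

theorem finkSum_succ (f : ℝ → ℝ) (m : ℕ) (α z : ℝ) :
    finkSum f (m + 1) α z = finkSum f m α z +
      ∑ j ∈ Finset.range (m + 1), (z - α) ^ (j + 1) / (j + 1)! * iteratedDeriv j f α := by
  simp only [finkSum, Finset.sum_range_succ]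
  rw [← add_assoc, ← Finset.sum_add_distrib]
  push_cast
  congr 1
  · exact Finset.sum_congr rfl fun j _ => by ring
  · ring

section OneSidedFink

variable {f : ℝ → ℝ} {s : Set ℝ} {n : ℕ} {α z : ℝ}

theorem integral_pow_mul_iteratedDeriv (hf : ContDiffOn ℝ n f s) (hs : IsOpen s) {k : ℕ}
    (hk : k ≤ n) (hαz : [[α, z]] ⊆ s) :
    ∫ t in α..z, (z - t) ^ k * iteratedDeriv k f t = k ! * ((∫ t in α..z, f t) -
      ∑ j ∈ Finset.range k, (z - α) ^ (j + 1) / (j + 1)! * iteratedDeriv j f α) := by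
  induction k with
  | zero => simp
  | succ k ih =>
    have hD : ContinuousOn (iteratedDeriv k f) [[α, z]] :=
      (hf.continuousOn_iteratedDeriv hs (by omega)).mono hαz
    have hD' : ContinuousOn (iteratedDeriv (k + 1) f) [[α, z]] :=
      (hf.continuousOn_iteratedDeriv hs hk).mono hαz
    rw [integral_mul_deriv_eq_deriv_mul (fun t _ => hasDerivAt_sub_pow_succ z t k)
      (fun t ht => hf.hasDerivAt_iteratedDeriv hs hk (hαz ht))
      (by apply ContinuousOn.intervalIntegrable; fun_prop) hD'.intervalIntegrable]
    have hneg : ∫ t in α..z, -((k + 1) * (z - t) ^ k) * iteratedDeriv k f t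
        = -((k + 1) * ∫ t in α..z, (z - t) ^ k * iteratedDeriv k f t) := by
      rw [← intervalIntegral.integral_const_mul, ← intervalIntegral.integral_neg]
      congr 1; ext t; ring
    rw [hneg, ih (by omega), Finset.sum_range_succ, Nat.factorial_succ]
    push_cast
    field_simp
    ring

theorem integral_pow_mul_sub_mul_iteratedDeriv (hf : ContDiffOn ℝ n f s) (hs : IsOpen s)
    {m : ℕ} (hm : m < n) (hαz : [[α, z]] ⊆ s) :
    ∫ t in α..z, (z - t) ^ m * (t - α) * iteratedDeriv (m + 1) f t
      = m ! * ((z - α) * f z + finkSum f m α z - (m + 1) * ∫ t in α..z, f t) := by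
  have hD : ∀ k ≤ n, ContinuousOn (iteratedDeriv k f) [[α, z]] := fun k hk =>
    (hf.continuousOn_iteratedDeriv hs hk).mono hαz
  induction m with
  | zero =>
    have := integral_mul_deriv_eq_deriv_mul (u := fun t => t - α) (u' := fun _ => 1)
      (fun t _ => (hasDerivAt_id t).sub_const α)
      (fun t ht => hf.hasDerivAt_iteratedDeriv hs hm (hαz ht))
      intervalIntegrable_const (hD 1 hm).intervalIntegrable
    simp only [iteratedDeriv_zero, sub_self, zero_mul, sub_zero, one_mul] at this
    simpa [finkSum] using this
  | succ m ih =>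
    have hu : ∀ t ∈ [[α, z]], HasDerivAt (fun u => (z - u) ^ (m + 1) * (u - α))
        (-((m + 1) * (z - t) ^ m) * (t - α) + (z - t) ^ (m + 1)) t := fun t _ => by
      simpa using (hasDerivAt_sub_pow_succ z t m).fun_mul ((hasDerivAt_id t).sub_const α)
    rw [integral_mul_deriv_eq_deriv_mul hu
      (fun t ht => hf.hasDerivAt_iteratedDeriv hs hm (hαz ht))
      (by apply ContinuousOn.intervalIntegrable; fun_prop) (hD (m + 2) hm).intervalIntegrable]
    have hsplit : ∫ t in α..z, (-((m + 1) * (z - t) ^ m) * (t - α) + (z - t) ^ (m + 1)) *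
          iteratedDeriv (m + 1) f t
        = -((m + 1) * ∫ t in α..z, (z - t) ^ m * (t - α) * iteratedDeriv (m + 1) f t) +
          ∫ t in α..z, (z - t) ^ (m + 1) * iteratedDeriv (m + 1) f t := by
      have hDm := hD (m + 1) hm.le
      rw [← intervalIntegral.integral_const_mul, ← intervalIntegral.integral_neg,
        ← intervalIntegral.integral_add (by apply ContinuousOn.intervalIntegrable; fun_prop)
          (by apply ContinuousOn.intervalIntegrable; fun_prop)]
      congr 1; ext t; ring
    rw [hsplit, ih (by omega), integral_pow_mul_iteratedDeriv hf hs hm.le hαz, finkSum_succ,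
      Nat.factorial_succ]
    simp only [sub_self, ne_eq, Nat.add_eq_zero_iff, one_ne_zero, and_false, not_false_eq_true,
      zero_pow, zero_mul, mul_zero]
    push_cast
    ring

end OneSidedFink

noncomputable def finkKernel (m : ℕ) (α β z t : ℝ) : ℝ :=
  if t ≤ z then (z - t) ^ m * (t - α) else (z - t) ^ m * (t - β)

theorem measurable_finkKernel (m : ℕ) (α β z : ℝ) : Measurable (finkKernel m α β z) :=
  Measurable.ite measurableSet_Iic (by fun_prop) (by fun_prop)

theorem intervalIntegrable_finkKernel_mul {m : ℕ} {α β z : ℝ} {g : ℝ → ℝ}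
    (hz : z ∈ Icc α β) (hg : ContinuousOn g (Icc α β)) :
    IntervalIntegrable (fun t => finkKernel m α β z t * g t) volume α β := by
  simp only [finkKernel, ite_mul]
  exact intervalIntegrable_ite_le hz
    (ContinuousOn.intervalIntegrable (by
      have := hg.mono (uIcc_subset_Icc (left_mem_Icc.mpr (hz.1.trans hz.2)) hz); fun_prop))
    (ContinuousOn.intervalIntegrable (by
      have := hg.mono (uIcc_subset_Icc hz (right_mem_Icc.mpr (hz.1.trans hz.2))); fun_prop))

theorem integral_finkKernel_mul_iteratedDeriv {f : ℝ → ℝ} {s : Set ℝ} {n m : ℕ}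
    {α β z : ℝ} (hf : ContDiffOn ℝ n f s) (hs : IsOpen s) (hm : m < n) (hz : z ∈ Icc α β)
    (hαβ : Icc α β ⊆ s) :
    ∫ t in α..β, finkKernel m α β z t * iteratedDeriv (m + 1) f t
      = m ! * ((β - α) * f z + finkSum f m α z - finkSum f m β z
          - (m + 1) * ∫ t in α..β, f t) := by
  have hαz : [[α, z]] ⊆ s :=
    (uIcc_subset_Icc (left_mem_Icc.mpr (hz.1.trans hz.2)) hz).trans hαβ
  have hβz : [[β, z]] ⊆ s :=
    (uIcc_subset_Icc (right_mem_Icc.mpr (hz.1.trans hz.2)) hz).trans hαβ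
  have hD := (hf.continuousOn_iteratedDeriv hs hm).mono hαz
  have hD' : ContinuousOn (iteratedDeriv (m + 1) f) [[z, β]] :=
    (hf.continuousOn_iteratedDeriv hs hm).mono (uIcc_comm z β ▸ hβz)
  have hf0 : ContinuousOn f s := by
    simpa using hf.continuousOn_iteratedDeriv hs (Nat.zero_le n)
  have hsplit : (∫ t in α..z, f t) + ∫ t in z..β, f t = ∫ t in α..β, f t :=
    integral_add_adjacent_intervals ((hf0.mono hαz).intervalIntegrable)
      ((hf0.mono (uIcc_comm z β ▸ hβz)).intervalIntegrable)
  simp only [finkKernel, ite_mul]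
  rw [integral_ite_le hz (by apply ContinuousOn.intervalIntegrable; fun_prop)
      (by apply ContinuousOn.intervalIntegrable; fun_prop), integral_symm β z,
    integral_pow_mul_sub_mul_iteratedDeriv hf hs hm hαz,
    integral_pow_mul_sub_mul_iteratedDeriv hf hs hm hβz]
  rw [integral_symm β z] at hsplit
  linear_combination -(m ! : ℝ) * (m + 1) * hsplit

theorem abs_pow_mul_rpow (u v q : ℝ) (m : ℕ) : |u ^ m * v| ^ q = |u| ^ (m * q) * |v| ^ q := by
  rw [abs_mul, abs_pow, Real.mul_rpow (by positivity) (abs_nonneg v), ← Real.rpow_natCast,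
    ← Real.rpow_mul (abs_nonneg u)]

theorem abs_finkKernel_rpow (m : ℕ) (α β z t q : ℝ) :
    |finkKernel m α β z t| ^ q
      = if t ≤ z then |t - α| ^ q * |z - t| ^ (m * q) else |t - z| ^ (m * q) * |β - t| ^ q := by
  unfold finkKernel
  split_ifs
  · rw [abs_pow_mul_rpow, mul_comm]
  · rw [abs_pow_mul_rpow, abs_sub_comm z t, abs_sub_comm t β]

section FinkKernel

variable {m : ℕ} {α β z q : ℝ}

theorem intervalIntegrable_abs_finkKernel_rpow (hq : 0 ≤ q) (hz : z ∈ Icc α β) :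
    IntervalIntegrable (fun t => |finkKernel m α β z t| ^ q) volume α β := by
  have hmq : 0 ≤ (m : ℝ) * q := by positivity
  simp only [abs_finkKernel_rpow]
  exact intervalIntegrable_ite_le hz
    (Continuous.intervalIntegrable (by fun_prop (disch := exact fun _ => Or.inr ‹_›)) _ _)
    (Continuous.intervalIntegrable (by fun_prop (disch := exact fun _ => Or.inr ‹_›)) _ _)

theorem integral_abs_finkKernel_rpow (hq : 0 ≤ q) (hz : z ∈ Icc α β) :
    ∫ t in α..β, |finkKernel m α β z t| ^ q
      = ((z - α) ^ ((m + 1) * q + 1) + (β - z) ^ ((m + 1) * q + 1))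
          * betaR (m * q + 1) (q + 1) := by
  have hmq : 0 ≤ (m : ℝ) * q := by positivity
  simp only [abs_finkKernel_rpow]
  rw [integral_ite_le hz
    (Continuous.intervalIntegrable (by fun_prop (disch := exact fun _ => Or.inr ‹_›)) _ _)
    (Continuous.intervalIntegrable (by fun_prop (disch := exact fun _ => Or.inr ‹_›)) _ _),
    integral_abs_sub_rpow_mul_abs_sub_rpow hz.1 (by positivity),
    integral_abs_sub_rpow_mul_abs_sub_rpow hz.2 (by positivity),
    betaR_comm (q + 1)]
  ring_nf

end FinkKernel

theorem mul_sum_Gterm (f : ℝ → ℝ) (m : ℕ) {a b : ℝ} (hab : a ≠ b) (x : ℝ) :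
    (b - a) * ∑ k ∈ Finset.Icc 1 m, Gterm f (m + 1) a b x k
      = finkSum f m a x - finkSum f m ((a + b) / 2) x
        + finkSum f m ((a + b) / 2) (a + b - x) - finkSum f m b (a + b - x) := by
  have hba : b - a ≠ 0 := sub_ne_zero.mpr hab.symm
  rw [← Finset.Ico_add_one_right_eq_Icc, Finset.sum_Ico_eq_sum_range, Nat.add_sub_cancel,
    Finset.mul_sum]
  simp only [finkSum, ← Finset.sum_sub_distrib, ← Finset.sum_add_distrib]
  refine Finset.sum_congr rfl fun j _ => ?_
  rw [Gterm, add_comm 1 j, Nat.add_sub_cancel,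
    show x - (a + b) / 2 = -((a + b) / 2 - x) by ring,
    show a + b - x - (a + b) / 2 = (a + b) / 2 - x by ring,
    show a + b - x - b = -(x - a) by ring, pow_succ (-1 : ℝ) (j + 1),
    neg_pow ((a + b) / 2 - x), neg_pow (x - a)]
  push_cast
  field_simp
  ring

-- Off the point `t = a + b - x`, this is `(x - t)^m * Skernel a b x t` for `t ≤ (a + b) / 2`
-- and `(a + b - x - t)^m * Skernel a b x t` for `t > (a + b) / 2`.
noncomputable def twoPointKernel (m : ℕ) (a b x t : ℝ) : ℝ :=
  if t ≤ (a + b) / 2 then finkKernel m a ((a + b) / 2) x t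
  else finkKernel m ((a + b) / 2) b (a + b - x) t

theorem measurable_twoPointKernel (m : ℕ) (a b x : ℝ) : Measurable (twoPointKernel m a b x) :=
  Measurable.ite measurableSet_Iic (measurable_finkKernel _ _ _ _) (measurable_finkKernel _ _ _ _)

theorem abs_twoPointKernel_rpow (m : ℕ) (a b x t q : ℝ) :
    |twoPointKernel m a b x t| ^ q
      = if t ≤ (a + b) / 2 then |finkKernel m a ((a + b) / 2) x t| ^ q
        else |finkKernel m ((a + b) / 2) b (a + b - x) t| ^ q :=
  apply_ite (fun y => |y| ^ q) _ _ _

section TwoPointKernel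

variable {m : ℕ} {a b x q : ℝ}

theorem midpoint_mem_Icc_of_mem_Icc_left (hx : x ∈ Icc a ((a + b) / 2)) :
    (a + b) / 2 ∈ Icc a b :=
  ⟨by linarith [hx.1, hx.2], by linarith [hx.1, hx.2]⟩

theorem add_sub_mem_Icc_of_mem_Icc_left (hx : x ∈ Icc a ((a + b) / 2)) :
    a + b - x ∈ Icc ((a + b) / 2) b :=
  ⟨by linarith [hx.2], by linarith [hx.1]⟩

theorem integral_twoPointKernel_mul_iteratedDeriv {f : ℝ → ℝ} {s : Set ℝ} {n : ℕ}
    (hf : ContDiffOn ℝ n f s) (hs : IsOpen s) (hm : m < n) (hab : a < b)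
    (hx : x ∈ Icc a ((a + b) / 2)) (habs : Icc a b ⊆ s) :
    ∫ t in a..b, twoPointKernel m a b x t * iteratedDeriv (m + 1) f t
      = m ! * ((b - a) * ((f x + f (a + b - x)) / 2
          + ∑ k ∈ Finset.Icc 1 m, Gterm f (m + 1) a b x k) - (m + 1) * ∫ t in a..b, f t) := by
  have hM := midpoint_mem_Icc_of_mem_Icc_left hx
  have hY := add_sub_mem_Icc_of_mem_Icc_left hx
  have hleft : Icc a ((a + b) / 2) ⊆ s := (Icc_subset_Icc_right hM.2).trans habs
  have hright : Icc ((a + b) / 2) b ⊆ s := (Icc_subset_Icc_left hM.1).trans habs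
  have hD := hf.continuousOn_iteratedDeriv hs hm
  have hf0 : ContinuousOn f s := by
    simpa using hf.continuousOn_iteratedDeriv hs (Nat.zero_le n)
  have hsplit :
      (∫ t in a..(a + b) / 2, f t) + ∫ t in (a + b) / 2..b, f t = ∫ t in a..b, f t :=
    integral_add_adjacent_intervals
      ((hf0.mono ((uIcc_of_le hM.1).symm ▸ hleft)).intervalIntegrable)
      ((hf0.mono ((uIcc_of_le hM.2).symm ▸ hright)).intervalIntegrable)
  simp only [twoPointKernel, ite_mul]
  rw [integral_ite_le hM (intervalIntegrable_finkKernel_mul hx (hD.mono hleft))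
      (intervalIntegrable_finkKernel_mul hY (hD.mono hright)),
    integral_finkKernel_mul_iteratedDeriv hf hs hm hx hleft,
    integral_finkKernel_mul_iteratedDeriv hf hs hm hY hright, mul_add (b - a),
    mul_sum_Gterm f m hab.ne]
  linear_combination -(m ! : ℝ) * (m + 1) * hsplit

theorem intervalIntegrable_abs_twoPointKernel_rpow (hq : 0 ≤ q) (hx : x ∈ Icc a ((a + b) / 2)) :
    IntervalIntegrable (fun t => |twoPointKernel m a b x t| ^ q) volume a b := by
  simp only [abs_twoPointKernel_rpow]
  exact intervalIntegrable_ite_le (midpoint_mem_Icc_of_mem_Icc_left hx)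
    (intervalIntegrable_abs_finkKernel_rpow hq hx)
    (intervalIntegrable_abs_finkKernel_rpow hq (add_sub_mem_Icc_of_mem_Icc_left hx))

theorem integral_abs_twoPointKernel_rpow (hq : 0 ≤ q) (hx : x ∈ Icc a ((a + b) / 2)) :
    ∫ t in a..b, |twoPointKernel m a b x t| ^ q
      = 2 * ((x - a) ^ ((m + 1) * q + 1) + ((a + b) / 2 - x) ^ ((m + 1) * q + 1))
          * betaR (m * q + 1) (q + 1) := by
  have hY := add_sub_mem_Icc_of_mem_Icc_left hx
  simp only [abs_twoPointKernel_rpow]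
  rw [integral_ite_le (midpoint_mem_Icc_of_mem_Icc_left hx)
      (intervalIntegrable_abs_finkKernel_rpow hq hx) (intervalIntegrable_abs_finkKernel_rpow hq hY),
    integral_abs_finkKernel_rpow hq hx, integral_abs_finkKernel_rpow hq hY,
    show a + b - x - (a + b) / 2 = (a + b) / 2 - x by ring, show b - (a + b - x) = x - a by ring]
  ring

theorem sub_integral_eq_integral_twoPointKernel_mul {f : ℝ → ℝ} {s : Set ℝ} {n : ℕ}
    (hf : ContDiffOn ℝ n f s) (hs : IsOpen s) (hm : m < n) (hab : a < b)
    (hx : x ∈ Icc a ((a + b) / 2)) (habs : Icc a b ⊆ s) :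
    1 / (m + 1 : ℝ) * ((f x + f (a + b - x)) / 2
        + ∑ k ∈ Finset.Icc 1 m, Gterm f (m + 1) a b x k) - 1 / (b - a) * ∫ t in a..b, f t
      = (∫ t in a..b, twoPointKernel m a b x t * iteratedDeriv (m + 1) f t)
          / ((m + 1)! * (b - a)) := by
  have hba : b - a ≠ 0 := (sub_pos.mpr hab).ne'
  rw [integral_twoPointKernel_mul_iteratedDeriv hf hs hm hab hx habs, Nat.factorial_succ]
  push_cast
  field_simp

theorem abs_integral_twoPointKernel_mul_le {p q : ℝ} (hpq : p.HolderConjugate q) {g : ℝ → ℝ}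
    (hx : x ∈ Icc a ((a + b) / 2)) (hg : ContinuousOn g (Icc a b)) :
    |∫ t in a..b, twoPointKernel m a b x t * g t|
      ≤ 2 ^ (1 / q) * ((x - a) ^ ((m + 1) * q + 1) + ((a + b) / 2 - x) ^ ((m + 1) * q + 1))
          ^ (1 / q) * betaR (m * q + 1) (q + 1) ^ (1 / q)
          * (∫ t in a..b, |g t| ^ p) ^ (1 / p) := by
  have hM := midpoint_mem_Icc_of_mem_Icc_left hx
  have hab : a ≤ b := hM.1.trans hM.2
  have hX : 0 ≤ (x - a) ^ ((m + 1) * q + 1) + ((a + b) / 2 - x) ^ ((m + 1) * q + 1) :=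
    add_nonneg (Real.rpow_nonneg (by linarith [hx.1]) _) (Real.rpow_nonneg (by linarith [hx.2]) _)
  have hHolder := abs_intervalIntegral_mul_le_Lp_mul_Lq hpq.symm hab
    (measurable_twoPointKernel m a b x).aestronglyMeasurable
    (intervalIntegrable_abs_twoPointKernel_rpow hpq.symm.nonneg hx)
    ((hg.mono Ioc_subset_Icc_self).aestronglyMeasurable measurableSet_Ioc)
    (ContinuousOn.intervalIntegrable ((uIcc_of_le hab).symm ▸
      hg.abs.rpow_const fun _ _ => Or.inr hpq.nonneg))
  rwa [integral_abs_twoPointKernel_rpow hpq.symm.nonneg hx,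
    Real.mul_rpow (by positivity) (betaR_nonneg _ _), Real.mul_rpow zero_le_two hX] at hHolder

end TwoPointKernel

theorem stmt_2_general (n : ℕ) (hn : 1 ≤ n) (p q : ℝ) (hp : 1 < p) (hq : q = p / (p - 1))
    (a b c d : ℝ) (hab : a < b)
    (hca : c < a) (hbd : b < d) (f : ℝ → ℝ)
    (hf : ContDiffOn ℝ (n : ℕ∞) f (Set.Ioo c d))
    (x : ℝ) (hx : x ∈ Set.Icc a ((a + b) / 2)) :
    |(1 / (n : ℝ)) *
          ((f x + f (a + b - x)) / 2 + ∑ k ∈ Finset.Icc 1 (n - 1), Gterm f n a b x k)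
        - (1 / (b - a)) * ∫ y in a..b, f y|
      ≤ ((2 : ℝ) ^ (1 / q) / ((n.factorial : ℝ) * (b - a))) *
          ((x - a) ^ ((n : ℝ) * q + 1) + ((a + b) / 2 - x) ^ ((n : ℝ) * q + 1)) ^ (1 / q) *
          (betaR (((n : ℝ) - 1) * q + 1) (q + 1)) ^ (1 / q) *
          (∫ t in a..b, |iteratedDeriv n f t| ^ p) ^ (1 / p) := by
  obtain ⟨m, rfl⟩ : ∃ m, n = m + 1 := ⟨n - 1, by omega⟩
  have hpq : p.HolderConjugate q := hq ▸ Real.HolderConjugate.conjExponent hp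
  have habs : Icc a b ⊆ Ioo c d := Icc_subset_Ioo hca hbd
  have hba : 0 < b - a := sub_pos.mpr hab
  have hD : (0 : ℝ) < (m + 1)! * (b - a) := by positivity
  push_cast
  rw [add_sub_cancel_right,
    sub_integral_eq_integral_twoPointKernel_mul hf isOpen_Ioo m.lt_succ_self hab hx habs,
    abs_div, abs_of_pos hD, div_le_iff₀ hD]
  refine (abs_integral_twoPointKernel_mul_le hpq hx
    ((hf.continuousOn_iteratedDeriv isOpen_Ioo le_rfl).mono habs)).trans_eq ?_
  field_simp

theorem stmt_2 (n : ℕ) (hn : 1 ≤ n) (p q : ℝ) (hp : 1 < p) (hq : q = p / (p - 1))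
    (a b c d : ℝ) (hab : a < b)
    (hca : c < a) (hbd : b < d) (f : ℝ → ℝ)
    (hf : ContDiffOn ℝ (n : ℕ∞) f (Set.Ioo c d))
    (hAC : AbsCont (iteratedDeriv n f) a b)
    (hLp : IntegrableOn (fun t => |iteratedDeriv n f t| ^ p) (Set.Icc a b))
    (x : ℝ) (hx : x ∈ Set.Icc a ((a + b) / 2)) :
    |(1 / (n : ℝ)) *
          ((f x + f (a + b - x)) / 2 + ∑ k ∈ Finset.Icc 1 (n - 1), Gterm f n a b x k)
        - (1 / (b - a)) * ∫ y in a..b, f y|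
      ≤ ((2 : ℝ) ^ (1 / q) / ((n.factorial : ℝ) * (b - a))) *
          ((x - a) ^ ((n : ℝ) * q + 1) + ((a + b) / 2 - x) ^ ((n : ℝ) * q + 1)) ^ (1 / q) *
          (betaR (((n : ℝ) - 1) * q + 1) (q + 1)) ^ (1 / q) *
          (∫ t in a..b, |iteratedDeriv n f t| ^ p) ^ (1 / p) :=
  stmt_2_general n hn p q hp hq a b c d hab hca hbd f hf x hx
end

section
/- Let n ≥ 1 and let f be n-times differentiable on an open interval containing [a,b] with f^(n) absolutely continuous and essentially bounded on [a,b]. Then for every x ∈ [a,(a+b)/2], | (1/n)·( (f(x)+f(a+b−x))/2 + Σ_{k=1}^{n−1} G_k(x) ) − (1/(b−a))·∫_a^b f(y) dy | ≤ (2/(n!·(b−a)·n·(n+1)))·( (x−a)^{n+1} + ((a+b)/2 − x)^{n+1} ) · ‖f^(n)‖_{L^∞[a,b]}. -/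
open MeasureTheory Set

/-- The essential supremum of `|g|` on `[a,b]` (the `L^∞[a,b]` norm). -/
noncomputable def essSupAbs (g : ℝ → ℝ) (a b : ℝ) : ℝ :=
  essSup (fun t => |g t|) (MeasureTheory.volume.restrict (Set.Icc a b))

/-!
Write `n = m + 1` and `y = a + b - x`. Integrating `(t - α) (t - β)^m f⁽ⁿ⁾(t)` by parts over
`[α, β]` (Taylor's formula with integral remainder, for `f` and for an antiderivative of `f`)
expresses it through `f(β)`, the derivatives `f⁽ᵏ⁾(α)` and `∫_α^β f`. The Peano kernel
`S(t, x) (t - c)^m`, with `c = x` left of `(a+b)/2` and `c = y` right of it, is of this form on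
each of `[a, x]`, `[x, (a+b)/2]`, `[(a+b)/2, y]`, `[y, b]`; adding the four pieces, the boundary
terms combine into `(f x + f y) / 2` and the `G_k(x)`, so the quadrature error is
`(-1)^m / (n! (b - a))` times `∫_a^b S(t, x) (t - c)^m f⁽ⁿ⁾(t) dt`. A piece of length `h`
contributes at most `‖f⁽ⁿ⁾‖_∞ ∫_0^h s (h - s)^m ds = ‖f⁽ⁿ⁾‖_∞ h^(n+1) / (n (n+1))`, and the
lengths are `x - a` and `(a+b)/2 - x`, each twice.
-/

open scoped Nat Interval

noncomputable def kernelIntegral (g : ℝ → ℝ) (m : ℕ) (α β : ℝ) : ℝ :=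
  ∫ t in α..β, (t - α) * (t - β) ^ m * g t

-- `∫_a^b S(t,x) (t - c)^m g(t) dt`, with `c = x` on `[a, (a+b)/2]` and `c = a + b - x` beyond.
noncomputable def kernelIntegralSum (g : ℝ → ℝ) (m : ℕ) (a b x : ℝ) : ℝ :=
  kernelIntegral g m a x - kernelIntegral g m ((a + b) / 2) x
    + kernelIntegral g m ((a + b) / 2) (a + b - x) - kernelIntegral g m b (a + b - x)

section DerivativeChain

variable (F : ℕ → ℝ → ℝ) {α β : ℝ}

theorem intervalIntegrable_of_hasDerivAt_chain {m : ℕ}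
    (hF : ∀ j < m, ∀ t ∈ [[α, β]], HasDerivAt (F j) (F (j + 1) t) t)
    (hFm : IntervalIntegrable (F m) volume α β) {j : ℕ} (hj : j ≤ m) :
    IntervalIntegrable (F j) volume α β := by
  rcases hj.lt_or_eq with hj | rfl
  · exact (HasDerivAt.continuousOn (hF j hj)).intervalIntegrable
  · exact hFm

-- Taylor's formula with integral remainder, for an antiderivative of `F 0`.
theorem integral_sub_pow_mul_of_hasDerivAt_chain (m : ℕ)
    (hF : ∀ j < m, ∀ t ∈ [[α, β]], HasDerivAt (F j) (F (j + 1) t) t)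
    (hFm : IntervalIntegrable (F m) volume α β) :
    ∫ t in α..β, (β - t) ^ m * F m t =
      m ! * ((∫ t in α..β, F 0 t)
        - ∑ k ∈ Finset.range m, (β - α) ^ (k + 1) / (k + 1)! * F k α) := by
  induction m with
  | zero => simp
  | succ m ih =>
    have ibp := intervalIntegral.integral_mul_deriv_eq_deriv_mul
      (u := fun t => (β - t) ^ (m + 1)) (u' := fun t => -((m + 1) * (β - t) ^ m))
      (fun t _ => by simpa using ((hasDerivAt_id t).const_sub β).fun_pow (m + 1))
      (hF m m.lt_succ_self) ((by fun_prop : Continuous _).intervalIntegrable _ _) hFm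
    have hm := ih (fun j hj => hF j (by omega))
      (intervalIntegrable_of_hasDerivAt_chain F hF hFm m.le_succ)
    simp only [sub_self, zero_pow m.succ_ne_zero, zero_mul, zero_sub, neg_mul,
      intervalIntegral.integral_neg, sub_neg_eq_add, mul_assoc,
      intervalIntegral.integral_const_mul, hm] at ibp
    rw [ibp, Finset.sum_range_succ, Nat.factorial_succ]
    push_cast
    field_simp
    ring

theorem kernelIntegral_eq_of_hasDerivAt_chain (m : ℕ)
    (hF : ∀ j < m + 1, ∀ t ∈ [[α, β]], HasDerivAt (F j) (F (j + 1) t) t)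
    (hFm : IntervalIntegrable (F (m + 1)) volume α β) :
    kernelIntegral (F (m + 1)) m α β =
      (-1) ^ m * m ! * ((β - α) * F 0 β
        + ∑ k ∈ Finset.range (m + 1), (m - k) / (k + 1)! * (β - α) ^ (k + 1) * F k α
        - (m + 1) * ∫ t in α..β, F 0 t) := by
  have top := integral_sub_pow_mul_of_hasDerivAt_chain F (m + 1) hF hFm
  have shifted := integral_sub_pow_mul_of_hasDerivAt_chain (fun j => F (j + 1)) m
    (fun j hj => hF (j + 1) (by omega)) hFm
  have ftc : ∫ t in α..β, F 1 t = F 0 β - F 0 α :=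
    intervalIntegral.integral_eq_sub_of_hasDerivAt (hF 0 (by omega))
    (intervalIntegrable_of_hasDerivAt_chain F hF hFm (by omega))
  have split : kernelIntegral (F (m + 1)) m α β =
      (-1) ^ (m + 1) * (∫ t in α..β, (β - t) ^ (m + 1) * F (m + 1) t)
        + (-1) ^ m * (β - α) * ∫ t in α..β, (β - t) ^ m * F (m + 1) t := by
    rw [kernelIntegral, ← intervalIntegral.integral_const_mul,
      ← intervalIntegral.integral_const_mul,
      ← intervalIntegral.integral_add
      ((hFm.continuousOn_mul (by fun_prop)).const_mul _)
      ((hFm.continuousOn_mul (by fun_prop)).const_mul _)]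
    congr 1; ext t; rw [show t - β = -(β - t) by ring, neg_pow]; ring
  have coeff : ∀ k : ℕ, ((m : ℝ) - k) / (k + 1)! * (β - α) ^ (k + 1) * F k α
      = (m + 1) * ((β - α) ^ (k + 1) / (k + 1)! * F k α)
        - (β - α) * ((β - α) ^ k / k ! * F k α) := by
    intro k; rw [Nat.factorial_succ]; push_cast; field_simp; ring
  rw [Finset.sum_congr rfl fun k _ => coeff k, Finset.sum_sub_distrib, ← Finset.mul_sum,
    ← Finset.mul_sum,
    Finset.sum_range_succ' (fun k => (β - α) ^ k / k ! * F k α), split, top, shifted, ftc]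
  simp only [pow_zero, Nat.factorial_zero, Nat.cast_one, div_one, one_mul]
  rw [pow_succ, Nat.factorial_succ]
  push_cast
  ring

end DerivativeChain

theorem integral_sub_mul_sub_pow (p : ℕ) (α β : ℝ) :
    ∫ t in α..β, (t - α) * (β - t) ^ p = (β - α) ^ (p + 2) / ((p + 1) * (p + 2)) := by
  have expand : ∀ t : ℝ, (t - α) * (β - t) ^ p = (β - α) * (β - t) ^ p - (β - t) ^ (p + 1) := by
    intro t; ring
  simp only [expand]
  rw [intervalIntegral.integral_sub ((by fun_prop : Continuous _).intervalIntegrable _ _)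
      ((by fun_prop : Continuous _).intervalIntegrable _ _), intervalIntegral.integral_const_mul,
    intervalIntegral.integral_comp_sub_left (fun u => u ^ p),
    intervalIntegral.integral_comp_sub_left (fun u => u ^ (p + 1)), integral_pow, integral_pow]
  simp only [sub_self, ne_eq, add_eq_zero, one_ne_zero, and_false, not_false_eq_true, zero_pow]
  push_cast
  field_simp
  ring

theorem integral_sub_pow_mul_sub (p : ℕ) (α β : ℝ) :
    ∫ t in α..β, (β - t) * (t - α) ^ p = (β - α) ^ (p + 2) / ((p + 1) * (p + 2)) := by
  have reflect := intervalIntegral.integral_comp_sub_left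
    (fun t => (t - α) * (β - t) ^ p) (a := α) (b := β) (α + β)
  simp only [add_sub_cancel_left, add_sub_cancel_right, integral_sub_mul_sub_pow] at reflect
  rw [← reflect]
  congr 1; ext t; ring

theorem abs_integral_abs_sub_mul_sub_pow (p : ℕ) (α β : ℝ) :
    |(∫ t in α..β, |(t - α) * (t - β) ^ p|)| = |β - α| ^ (p + 2) / ((p + 1) * (p + 2)) := by
  rcases le_total α β with hαβ | hβα
  · rw [abs_of_nonneg (sub_nonneg.2 hαβ), ← integral_sub_mul_sub_pow,
      abs_of_nonneg (intervalIntegral.integral_nonneg hαβ fun t _ => abs_nonneg _)]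
    refine intervalIntegral.integral_congr fun t ht => ?_
    rw [uIcc_of_le hαβ] at ht
    simp only [abs_mul, abs_pow, abs_of_nonneg (sub_nonneg.2 ht.1), abs_sub_comm t β,
      abs_of_nonneg (sub_nonneg.2 ht.2)]
  · rw [intervalIntegral.integral_symm, abs_neg, abs_sub_comm, abs_of_nonneg (sub_nonneg.2 hβα),
      ← integral_sub_pow_mul_sub,
      abs_of_nonneg (intervalIntegral.integral_nonneg hβα fun t _ => abs_nonneg _)]
    refine intervalIntegral.integral_congr fun t ht => ?_
    rw [uIcc_of_le hβα] at ht
    simp only [abs_mul, abs_pow, abs_of_nonneg (sub_nonneg.2 ht.1), abs_sub_comm t α,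
      abs_of_nonneg (sub_nonneg.2 ht.2)]

theorem abs_integral_mul_le_of_ae_abs_le {K g : ℝ → ℝ} {α β M : ℝ}
    (hK : ContinuousOn K [[α, β]]) (hM : ∀ᵐ t, t ∈ Ι α β → |g t| ≤ M) :
    |∫ t in α..β, K t * g t| ≤ |(∫ t in α..β, |K t|)| * M := by
  wlog hαβ : α ≤ β generalizing α β
  · rw [intervalIntegral.integral_symm (E := ℝ) β α, abs_neg,
      intervalIntegral.integral_symm (E := ℝ) β α, abs_neg]
    exact this (uIcc_comm α β ▸ hK) (uIoc_comm α β ▸ hM) (le_of_not_ge hαβ)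
  rw [abs_of_nonneg (intervalIntegral.integral_nonneg hαβ fun t _ => abs_nonneg (K t)),
    ← intervalIntegral.integral_mul_const, ← Real.norm_eq_abs]
  refine intervalIntegral.norm_integral_le_of_norm_le hαβ ?_
    ((hK.abs.mul continuousOn_const).intervalIntegrable (μ := volume))
  filter_upwards [hM] with t ht htI
  rw [Real.norm_eq_abs, abs_mul]
  exact mul_le_mul_of_nonneg_left (ht (by rwa [uIoc_of_le hαβ])) (abs_nonneg _)

theorem abs_kernelIntegral_le {g : ℝ → ℝ} {α β M : ℝ} (p : ℕ)
    (hM : ∀ᵐ t, t ∈ Ι α β → |g t| ≤ M) :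
    |kernelIntegral g p α β| ≤ |β - α| ^ (p + 2) / ((p + 1) * (p + 2)) * M := by
  simpa only [kernelIntegral, abs_integral_abs_sub_mul_sub_pow] using
    abs_integral_mul_le_of_ae_abs_le (K := fun t => (t - α) * (t - β) ^ p) (by fun_prop) hM

section IteratedDeriv

variable {𝕜 E : Type*} [NontriviallyNormedField 𝕜] [NormedAddCommGroup E] [NormedSpace 𝕜 E]
  {f : 𝕜 → E} {s : Set 𝕜} {n : WithTop ℕ∞} {m : ℕ}

theorem ContDiffOn.continuousOn_iteratedDeriv_of_isOpen (hf : ContDiffOn 𝕜 n f s) (hs : IsOpen s)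
    (hmn : m ≤ n) : ContinuousOn (iteratedDeriv m f) s :=
  (hf.continuousOn_iteratedDerivWithin hmn hs.uniqueDiffOn).congr
    fun _ ht => (iteratedDerivWithin_of_isOpen hs ht).symm

theorem ContDiffOn.hasDerivAt_iteratedDeriv_of_isOpen (hf : ContDiffOn 𝕜 n f s) (hs : IsOpen s)
    (hmn : m < n) {x : 𝕜} (hx : x ∈ s) :
    HasDerivAt (iteratedDeriv m f) (iteratedDeriv (m + 1) f x) x := by
  have hd := (hf.differentiableOn_iteratedDerivWithin hmn hs.uniqueDiffOn).congr
    fun _ ht => (iteratedDerivWithin_of_isOpen hs ht).symm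
  rw [iteratedDeriv_succ]
  exact (hd.differentiableAt (hs.mem_nhds hx)).hasDerivAt

end IteratedDeriv

theorem ContinuousOn.ae_abs_le_essSupAbs {g : ℝ → ℝ} {a b : ℝ} (hg : ContinuousOn g (Icc a b)) :
    ∀ᵐ t, t ∈ Icc a b → |g t| ≤ essSupAbs g a b := by
  obtain ⟨C, hC⟩ := isCompact_Icc.exists_bound_of_continuousOn hg
  have hbdd : Filter.IsBoundedUnder (· ≤ ·) (ae (volume.restrict (Icc a b))) fun t => |g t| :=
    ⟨C, (ae_restrict_of_forall_mem measurableSet_Icc hC)⟩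
  exact (ae_restrict_iff' measurableSet_Icc).1 (ae_le_essSup hbdd)

theorem sum_Icc_Gterm_eq_sum_range (f : ℝ → ℝ) (m : ℕ) (a b x : ℝ) :
    ∑ k ∈ Finset.Icc 1 m, Gterm f (m + 1) a b x k
      = ∑ k ∈ Finset.range (m + 1), Gterm f (m + 1) a b x (k + 1) := by
  rw [Finset.range_eq_Ico, Finset.sum_Ico_add' (Gterm f (m + 1) a b x) 0 (m + 1) 1, zero_add,
    Finset.sum_Ico_succ_top (by omega), Finset.Ico_add_one_right_eq_Icc]
  simp [Gterm]

theorem mul_Gterm_succ_eq (f : ℝ → ℝ) (m k : ℕ) {a b : ℝ} (hab : a ≠ b) (x : ℝ) :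
    (b - a) * Gterm f (m + 1) a b x (k + 1)
      = (m - k) / (k + 1)! * (x - a) ^ (k + 1) * iteratedDeriv k f a
        - (m - k) / (k + 1)! * (x - (a + b) / 2) ^ (k + 1) * iteratedDeriv k f ((a + b) / 2)
        + (m - k) / (k + 1)! * (a + b - x - (a + b) / 2) ^ (k + 1) * iteratedDeriv k f ((a + b) / 2)
        - (m - k) / (k + 1)! * (a + b - x - b) ^ (k + 1) * iteratedDeriv k f b := by
  rw [Gterm, show x - (a + b) / 2 = -((a + b) / 2 - x) by ring,
    show a + b - x - (a + b) / 2 = (a + b) / 2 - x by ring,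
    show a + b - x - b = -(x - a) by ring, neg_pow ((a + b) / 2 - x), neg_pow (x - a)]
  have hba : b - a ≠ 0 := sub_ne_zero.2 hab.symm
  push_cast
  field_simp
  ring

theorem integral_split_symmetric {f : ℝ → ℝ} {a b x : ℝ} (hf : IntervalIntegrable f volume a b)
    (hx : x ∈ Icc a ((a + b) / 2)) :
    (∫ t in a..x, f t) - (∫ t in (a + b) / 2..x, f t) + (∫ t in (a + b) / 2..a + b - x, f t)
      - (∫ t in b..a + b - x, f t) = ∫ t in a..b, f t := by
  obtain ⟨hax, hxm⟩ := hx
  have hfi : ∀ {α β}, α ∈ Icc a b → β ∈ Icc a b → IntervalIntegrable f volume α β :=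
    fun hα hβ => hf.mono_set (uIcc_subset_uIcc (Icc_subset_uIcc hα) (Icc_subset_uIcc hβ))
  have ha : a ∈ Icc a b := ⟨le_rfl, by linarith⟩
  have hx : x ∈ Icc a b := ⟨hax, by linarith⟩
  have hmid : (a + b) / 2 ∈ Icc a b := ⟨by linarith, by linarith⟩
  have hy : a + b - x ∈ Icc a b := ⟨by linarith, by linarith⟩
  have hb : b ∈ Icc a b := ⟨by linarith, le_rfl⟩
  rw [intervalIntegral.integral_symm x ((a + b) / 2), intervalIntegral.integral_symm (a + b - x) b,
    ← intervalIntegral.integral_add_adjacent_intervals (hfi ha hy) (hfi hy hb),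
    ← intervalIntegral.integral_add_adjacent_intervals (hfi ha hmid) (hfi hmid hy),
    ← intervalIntegral.integral_add_adjacent_intervals (hfi ha hx) (hfi hx hmid)]
  ring

theorem kernelIntegralSum_eq {f : ℝ → ℝ} {a b x : ℝ} (m : ℕ) (hab : a < b)
    (hx : x ∈ Icc a ((a + b) / 2))
    (hF : ∀ j < m + 1, ∀ t ∈ Icc a b, HasDerivAt (iteratedDeriv j f) (iteratedDeriv (j + 1) f t) t)
    (hFm : ContinuousOn (iteratedDeriv (m + 1) f) (Icc a b)) :
    kernelIntegralSum (iteratedDeriv (m + 1) f) m a b x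
      = (-1) ^ m * (m + 1)! * (b - a) *
        ((1 / ((m + 1 : ℕ) : ℝ)) * ((f x + f (a + b - x)) / 2
            + ∑ k ∈ Finset.Icc 1 m, Gterm f (m + 1) a b x k)
          - (1 / (b - a)) * ∫ y in a..b, f y) := by
  have panel : ∀ {α β}, α ∈ Icc a b → β ∈ Icc a b →
      kernelIntegral (iteratedDeriv (m + 1) f) m α β = (-1) ^ m * m ! * ((β - α) * f β
        + ∑ k ∈ Finset.range (m + 1), (m - k) / (k + 1)! * (β - α) ^ (k + 1) * iteratedDeriv k f α
        - (m + 1) * ∫ t in α..β, f t) := fun hα hβ =>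
    kernelIntegral_eq_of_hasDerivAt_chain (fun j => iteratedDeriv j f) m
      (fun j hj t ht => hF j hj t (uIcc_subset_Icc hα hβ ht))
      ((hFm.mono (uIcc_subset_Icc hα hβ)).intervalIntegrable)
  have integrals := integral_split_symmetric (f := f)
    (by simpa using (HasDerivAt.continuousOn (hF 0 m.succ_pos)).intervalIntegrable_of_Icc hab.le) hx
  have sums := Finset.sum_congr rfl fun k (_ : k ∈ Finset.range (m + 1)) =>
    (mul_Gterm_succ_eq f m k hab.ne x).symm
  rw [Finset.sum_sub_distrib, Finset.sum_add_distrib, Finset.sum_sub_distrib,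
    ← Finset.mul_sum, ← sum_Icc_Gterm_eq_sum_range, mul_comm] at sums
  have hba : b - a ≠ 0 := sub_ne_zero.2 hab.ne'
  obtain ⟨hax, hxm⟩ := hx
  rw [kernelIntegralSum, panel ⟨le_rfl, hab.le⟩ ⟨hax, by linarith⟩,
    panel ⟨by linarith, by linarith⟩ ⟨hax, by linarith⟩,
    panel ⟨by linarith, by linarith⟩ ⟨by linarith, by linarith⟩,
    panel ⟨hab.le, le_rfl⟩ ⟨by linarith, by linarith⟩, eq_div_of_mul_eq hba sums.symm,
    ← integrals, Nat.factorial_succ]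
  push_cast
  field_simp
  ring

theorem abs_kernelIntegralSum_le {g : ℝ → ℝ} {a b x M : ℝ} (m : ℕ)
    (hx : x ∈ Icc a ((a + b) / 2))
    (hM : ∀ᵐ t, t ∈ Icc a b → |g t| ≤ M) :
    |kernelIntegralSum g m a b x|
      ≤ 2 * ((x - a) ^ (m + 2) + ((a + b) / 2 - x) ^ (m + 2)) / ((m + 1) * (m + 2)) * M := by
  rw [kernelIntegralSum]
  set P := kernelIntegral g m
  obtain ⟨hax, hxm⟩ := hx
  have panel : ∀ {α β}, α ∈ Icc a b → β ∈ Icc a b →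
      |P α β| ≤ |β - α| ^ (m + 2) / ((m + 1) * (m + 2)) * M := fun hα hβ =>
    abs_kernelIntegral_le m
      (hM.mono fun t ht ht' => ht (uIcc_subset_Icc hα hβ (uIoc_subset_uIcc ht')))
  have h1 := panel (α := a) (β := x) ⟨le_rfl, by linarith⟩ ⟨hax, by linarith⟩
  have h2 := panel (α := (a + b) / 2) (β := x) ⟨by linarith, by linarith⟩ ⟨hax, by linarith⟩
  have h3 := panel (α := (a + b) / 2) (β := a + b - x) ⟨by linarith, by linarith⟩
    ⟨by linarith, by linarith⟩
  have h4 := panel (α := b) (β := a + b - x) ⟨by linarith, le_rfl⟩ ⟨by linarith, by linarith⟩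
  rw [abs_of_nonneg (by linarith : 0 ≤ x - a)] at h1
  rw [abs_sub_comm, abs_of_nonneg (by linarith : 0 ≤ (a + b) / 2 - x)] at h2
  rw [show a + b - x - (a + b) / 2 = (a + b) / 2 - x by ring,
    abs_of_nonneg (by linarith : 0 ≤ (a + b) / 2 - x)] at h3
  rw [show a + b - x - b = -(x - a) by ring, abs_neg, abs_of_nonneg (by linarith : 0 ≤ x - a)] at h4
  have total : 2 * ((x - a) ^ (m + 2) + ((a + b) / 2 - x) ^ (m + 2)) / ((m + 1) * (m + 2)) * M
      = (x - a) ^ (m + 2) / ((m + 1) * (m + 2)) * M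
        + ((a + b) / 2 - x) ^ (m + 2) / ((m + 1) * (m + 2)) * M
        + ((a + b) / 2 - x) ^ (m + 2) / ((m + 1) * (m + 2)) * M
        + (x - a) ^ (m + 2) / ((m + 1) * (m + 2)) * M := by ring
  have t1 := abs_sub (P a x - P ((a + b) / 2) x + P ((a + b) / 2) (a + b - x)) (P b (a + b - x))
  have t2 := abs_add_le (P a x - P ((a + b) / 2) x) (P ((a + b) / 2) (a + b - x))
  have t3 := abs_sub (P a x) (P ((a + b) / 2) x)
  linarith

theorem stmt_3_general (n : ℕ) (hn : 1 ≤ n) (a b c d : ℝ) (hab : a < b)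
    (hca : c < a) (hbd : b < d) (f : ℝ → ℝ)
    (hf : ContDiffOn ℝ (n : ℕ∞) f (Set.Ioo c d))
    (x : ℝ) (hx : x ∈ Set.Icc a ((a + b) / 2)) :
    |(1 / (n : ℝ)) *
          ((f x + f (a + b - x)) / 2 + ∑ k ∈ Finset.Icc 1 (n - 1), Gterm f n a b x k)
        - (1 / (b - a)) * ∫ y in a..b, f y|
      ≤ (2 / ((n.factorial : ℝ) * (b - a) * n * (n + 1))) *
          ((x - a) ^ (n + 1) + ((a + b) / 2 - x) ^ (n + 1)) *
          essSupAbs (iteratedDeriv n f) a b := by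
  obtain ⟨m, rfl⟩ : ∃ m, n = m + 1 := ⟨n - 1, by omega⟩
  have hsub : Icc a b ⊆ Ioo c d := Icc_subset_Ioo hca hbd
  have hcont : ContinuousOn (iteratedDeriv (m + 1) f) (Icc a b) :=
    (hf.continuousOn_iteratedDeriv_of_isOpen isOpen_Ioo le_rfl).mono hsub
  have rep := kernelIntegralSum_eq m hab hx (fun j hj t ht =>
    hf.hasDerivAt_iteratedDeriv_of_isOpen isOpen_Ioo (by exact_mod_cast hj) (hsub ht)) hcont
  have bound := abs_kernelIntegralSum_le m hx hcont.ae_abs_le_essSupAbs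
  rw [rep, abs_mul, abs_mul, abs_mul, abs_pow, abs_neg, abs_one, one_pow, one_mul,
    Nat.abs_cast, abs_of_pos (sub_pos.2 hab)] at bound
  have hpos : (0 : ℝ) < (m + 1)! * (b - a) := by positivity
  rw [Nat.add_sub_cancel, ← mul_le_mul_iff_of_pos_left hpos]
  refine bound.trans_eq ?_
  have hba : b - a ≠ 0 := (sub_pos.2 hab).ne'
  push_cast
  field_simp
  ring

theorem stmt_3 (n : ℕ) (hn : 1 ≤ n) (a b c d : ℝ) (hab : a < b)
    (hca : c < a) (hbd : b < d) (f : ℝ → ℝ)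
    (hf : ContDiffOn ℝ (n : ℕ∞) f (Set.Ioo c d))
    (hAC : AbsCont (iteratedDeriv n f) a b)
    (hbdd : ∃ C : ℝ, ∀ᵐ t ∂(MeasureTheory.volume.restrict (Set.Icc a b)),
      |iteratedDeriv n f t| ≤ C)
    (x : ℝ) (hx : x ∈ Set.Icc a ((a + b) / 2)) :
    |(1 / (n : ℝ)) *
          ((f x + f (a + b - x)) / 2 + ∑ k ∈ Finset.Icc 1 (n - 1), Gterm f n a b x k)
        - (1 / (b - a)) * ∫ y in a..b, f y|
      ≤ (2 / ((n.factorial : ℝ) * (b - a) * n * (n + 1))) *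
          ((x - a) ^ (n + 1) + ((a + b) / 2 - x) ^ (n + 1)) *
          essSupAbs (iteratedDeriv n f) a b :=
  stmt_3_general n hn a b c d hab hca hbd f hf x hx
end

section
/- Let n ≥ 1, let (P_k)_{k≥0} be a harmonic sequence of polynomials, let 1 ≤ p ≤ ∞ with conjugate exponent q (1/p + 1/q = 1), and let f be n-times differentiable on an open interval containing [a,b] with f^(n) absolutely continuous on [a,b] and f^(n) ∈ L^p[a,b]. Then for every x ∈ [a,(a+b)/2], | (1/n)·( (f(x)+f(a+b−x))/2 + Σ_{k=1}^{n−1} ( T_k(x) + F̃_k(a,b) ) ) − (1/(b−a))·∫_a^b f(y) dy | ≤ (1/n)·( 1/4 + |x−(3a+b)/4|/(b−a) )·‖P_{n−1}‖_{L^q[a,b]}·‖f^(n)‖_{L^p[a,b]}. -/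
open MeasureTheory Set
open scoped ENNReal

/-- A harmonic sequence of polynomials: `P 0 = 1` and `(P (k+1))' = P k`. -/
def HarmonicSeq (P : ℕ → Polynomial ℝ) : Prop :=
  P 0 = 1 ∧ ∀ k, (P (k + 1)).derivative = P k

/-- The term `T_k(x)` of the harmonic-sequence expansion. -/
noncomputable def Tterm (P : ℕ → Polynomial ℝ) (f : ℝ → ℝ) (a b x : ℝ) (k : ℕ) : ℝ :=
  ((-1 : ℝ) ^ k / 2) *
    ((P k).eval x * iteratedDeriv k f x +
      (P k).eval (a + b - x) * iteratedDeriv k f (a + b - x))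

/-- The term `F̃_k(a,b)` of the harmonic-sequence expansion. -/
noncomputable def Ftilde (P : ℕ → Polynomial ℝ) (f : ℝ → ℝ) (n : ℕ) (a b : ℝ) (k : ℕ) : ℝ :=
  ((-1 : ℝ) ^ k * ((n : ℝ) - k) / (b - a)) *
    ((P k).eval a * iteratedDeriv (k - 1) f a - (P k).eval b * iteratedDeriv (k - 1) f b)

/-!
Let `S = Skernel a b x`, equal to `t - a`, `t - (a + b) / 2`, `t - b` on `[a, x]`,
`(x, a + b - x)`, `[a + b - x, b]`. Integrating by parts on the three pieces gives
`∫ S g' = (b - a) / 2 * (g x + g (a + b - x)) - ∫ g`. Applied to `g = P k * f⁽ᵏ⁾`, whose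
derivative is `P (k - 1) * f⁽ᵏ⁾ + P k * f⁽ᵏ⁺¹⁾`, and combined with the repeated integration by
parts of `∫ P k * f⁽ᵏ⁾`, this shows by induction on `n` that the left-hand side equals
`|∫ S * P (n - 1) * f⁽ⁿ⁾| / (n * (b - a))`. Since `|S| ≤ (b - a) / 4 + |x - (3 * a + b) / 4|` on
`[a, b]`, Hölder's inequality finishes the proof.
-/

section IteratedDeriv

variable {𝕜 : Type*} [NontriviallyNormedField 𝕜] {F : Type*} [NormedAddCommGroup F]
  [NormedSpace 𝕜 F] {f : 𝕜 → F} {N : WithTop ℕ∞} {k : ℕ} {x : 𝕜}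

theorem ContDiffAt.hasDerivAt_iteratedDeriv (hf : ContDiffAt 𝕜 N f x)
    (hk : (k : WithTop ℕ∞) < N) :
    HasDerivAt (iteratedDeriv k f) (iteratedDeriv (k + 1) f x) x := by
  have hd : DifferentiableAt 𝕜 (iteratedDeriv k f) x := by
    rw [iteratedDeriv_eq_equiv_comp]
    exact (LinearIsometryEquiv.differentiableAt _).comp x
      (hf.differentiableAt_iteratedFDeriv hk)
  rw [iteratedDeriv_succ]
  exact hd.hasDerivAt

theorem ContDiffAt.continuousAt_iteratedDeriv (hf : ContDiffAt 𝕜 N f x)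
    (hk : (k : WithTop ℕ∞) ≤ N) :
    ContinuousAt (iteratedDeriv k f) x := by
  rw [iteratedDeriv_eq_equiv_comp]
  exact (LinearIsometryEquiv.continuous _).continuousAt.comp
    (hf.continuousAt_iteratedFDeriv hk)

theorem continuousOn_iteratedDeriv_of_contDiffAt {s : Set 𝕜} (hf : ∀ t ∈ s, ContDiffAt 𝕜 N f t)
    (hk : (k : WithTop ℕ∞) ≤ N) : ContinuousOn (iteratedDeriv k f) s :=
  fun t ht => ((hf t ht).continuousAt_iteratedDeriv hk).continuousWithinAt

end IteratedDeriv

theorem ContinuousOn.memLp_restrict_of_isCompact {X E : Type*} [TopologicalSpace X] [T2Space X]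
    [MeasurableSpace X] [OpensMeasurableSpace X] {μ : Measure X} [IsFiniteMeasureOnCompacts μ]
    [NormedAddCommGroup E] {p : ℝ≥0∞} {g : X → E} {s : Set X}
    (hs : IsCompact s) (hg : ContinuousOn g s) : MemLp g p (μ.restrict s) := by
  have : IsFiniteMeasure (μ.restrict s) := isFiniteMeasure_restrict.mpr hs.measure_lt_top.ne
  obtain ⟨C, hC⟩ := hs.exists_bound_of_continuousOn hg
  exact .of_bound (hg.aestronglyMeasurable_of_isCompact hs hs.measurableSet) C
    ((ae_restrict_mem hs.measurableSet).mono hC)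

theorem integral_abs_mul_le_eLpNorm_mul_eLpNorm {α : Type*} [MeasurableSpace α] {μ : Measure α}
    {p q : ℝ≥0∞} [p.HolderConjugate q] {g h : α → ℝ} (hg : MemLp g p μ) (hh : MemLp h q μ) :
    ∫ t, |g t * h t| ∂μ ≤ (eLpNorm g p μ).toReal * (eLpNorm h q μ).toReal := by
  have holder : eLpNorm (fun t => g t * h t) 1 μ ≤ eLpNorm g p μ * eLpNorm h q μ := by
    simpa using eLpNorm_le_eLpNorm_mul_eLpNorm'_of_norm hg.1 hh.1 (· * ·) 1
      (.of_forall fun t => by simp [norm_mul])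
  rw [← ENNReal.toReal_mul]
  calc ∫ t, |g t * h t| ∂μ = (eLpNorm (fun t => g t * h t) 1 μ).toReal := by
        rw [eLpNorm_one_eq_lintegral_enorm,
          ← integral_norm_eq_lintegral_enorm (f := fun t => g t * h t) (hg.1.mul hh.1)]
        rfl
    _ ≤ _ := ENNReal.toReal_mono (ENNReal.mul_ne_top hg.2.ne hh.2.ne) holder

theorem continuousOn_eval_mul_iteratedDeriv {p : Polynomial ℝ} {f : ℝ → ℝ} {s : Set ℝ} {N k : ℕ}
    (hf : ∀ t ∈ s, ContDiffAt ℝ N f t) (hk : k ≤ N) :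
    ContinuousOn (fun t => p.eval t * iteratedDeriv k f t) s :=
  p.continuous.continuousOn.mul
    (continuousOn_iteratedDeriv_of_contDiffAt hf (by exact_mod_cast hk))

section Kernel

variable {a b x t : ℝ}

theorem Skernel_of_le (ht : t ≤ x) : Skernel a b x t = t - a := if_pos ht

theorem Skernel_of_lt_of_lt (hxt : x < t) (ht : t < a + b - x) :
    Skernel a b x t = t - (a + b) / 2 := by
  rw [Skernel, if_neg hxt.not_ge, if_pos ht]

theorem Skernel_of_lt_of_le (hxt : x < t) (ht : a + b - x ≤ t) : Skernel a b x t = t - b := by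
  rw [Skernel, if_neg hxt.not_ge, if_neg ht.not_gt]

theorem measurable_Skernel (a b x : ℝ) : Measurable (Skernel a b x) :=
  Measurable.ite (measurableSet_le measurable_id measurable_const)
    (measurable_id.sub measurable_const)
    (Measurable.ite (measurableSet_lt measurable_id measurable_const)
      (measurable_id.sub measurable_const) (measurable_id.sub measurable_const))

-- `(b - a) / 4 + |x - (3 * a + b) / 4| = max (x - a) ((a + b) / 2 - x)`.
theorem abs_Skernel_le (ht : t ∈ Icc a b) :
    |Skernel a b x t| ≤ (b - a) / 4 + |x - (3 * a + b) / 4| := by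
  have h₁ := le_abs_self (x - (3 * a + b) / 4)
  have h₂ := neg_abs_le (x - (3 * a + b) / 4)
  unfold Skernel
  split_ifs <;> rw [abs_le] <;> constructor <;> linarith [ht.1, ht.2]

theorem IntervalIntegrable.Skernel_mul (hab : a ≤ b) {h : ℝ → ℝ}
    (hh : IntervalIntegrable h volume a b) :
    IntervalIntegrable (fun t => Skernel a b x t * h t) volume a b := by
  rw [intervalIntegrable_iff_integrableOn_Ioc_of_le hab] at hh ⊢
  refine hh.bdd_mul (c := (b - a) / 4 + |x - (3 * a + b) / 4|)
    (measurable_Skernel a b x).aestronglyMeasurable ?_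
  filter_upwards [ae_restrict_mem measurableSet_Ioc] with t ht
  exact abs_Skernel_le (Ioc_subset_Icc_self ht)

theorem integral_mul_deriv_of_eqOn_sub_const {φ g g' : ℝ → ℝ} {u v c : ℝ}
    (hφ : EqOn φ (· - c) (uIoo u v)) (hg : ∀ t ∈ uIcc u v, HasDerivAt g (g' t) t)
    (hg' : IntervalIntegrable g' volume u v) :
    ∫ t in u..v, φ t * g' t = (v - c) * g v - (u - c) * g u - ∫ t in u..v, g t := by
  rw [intervalIntegral.integral_congr_uIoo fun t ht => congrArg (· * g' t) (hφ ht)]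
  simpa using intervalIntegral.integral_mul_deriv_eq_deriv_mul
    (fun t _ => (hasDerivAt_id t).sub_const c) hg intervalIntegrable_const hg'

theorem integral_Skernel_mul_deriv (hax : a ≤ x) (hxm : x ≤ (a + b) / 2) {g g' : ℝ → ℝ}
    (hg : ∀ t ∈ Icc a b, HasDerivAt g (g' t) t) (hg' : IntervalIntegrable g' volume a b) :
    ∫ t in a..b, Skernel a b x t * g' t
      = (b - a) / 2 * (g x + g (a + b - x)) - ∫ t in a..b, g t := by
  have hxy : x ≤ a + b - x := by linarith
  have hyb : a + b - x ≤ b := by linarith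
  have hxb := hxy.trans hyb
  have hab := hax.trans hxb
  have sub : ∀ {u v}, a ≤ u → u ≤ v → v ≤ b → uIcc u v ⊆ uIcc a b := fun hau huv hvb => by
    rw [uIcc_of_le huv, uIcc_of_le hab]
    exact Icc_subset_Icc hau hvb
  have ii : ∀ {φ : ℝ → ℝ}, IntervalIntegrable φ volume a b →
      ∀ {u v}, a ≤ u → u ≤ v → v ≤ b → IntervalIntegrable φ volume u v :=
    fun hφ _ _ hau huv hvb => hφ.mono_set (sub hau huv hvb)
  have piece : ∀ {u v} c, a ≤ u → u ≤ v → v ≤ b → EqOn (Skernel a b x) (· - c) (Ioo u v) →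
      ∫ t in u..v, Skernel a b x t * g' t = (v - c) * g v - (u - c) * g u - ∫ t in u..v, g t :=
    fun c hau huv hvb hS => integral_mul_deriv_of_eqOn_sub_const (uIoo_of_le huv ▸ hS)
      (fun t ht => hg t (uIcc_of_le hab ▸ sub hau huv hvb ht)) (ii hg' hau huv hvb)
  have hSi : IntervalIntegrable (fun t => Skernel a b x t * g' t) volume a b :=
    hg'.Skernel_mul hab
  have hgi : IntervalIntegrable g volume a b :=
    (HasDerivAt.continuousOn fun t ht => hg t (uIcc_of_le hab ▸ ht)).intervalIntegrable
  rw [← intervalIntegral.integral_add_adjacent_intervals (ii hSi le_rfl hax hxb)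
      (ii hSi hax hxb le_rfl),
    ← intervalIntegral.integral_add_adjacent_intervals (ii hSi hax hxy hyb)
      (ii hSi (hax.trans hxy) hyb le_rfl),
    ← intervalIntegral.integral_add_adjacent_intervals (ii hgi le_rfl hax hxb)
      (ii hgi hax hxb le_rfl),
    ← intervalIntegral.integral_add_adjacent_intervals (ii hgi hax hxy hyb)
      (ii hgi (hax.trans hxy) hyb le_rfl),
    piece a le_rfl hax hxb fun t ht => Skernel_of_le ht.2.le,
    piece ((a + b) / 2) hax hxy hyb fun t ht => Skernel_of_lt_of_lt ht.1 ht.2,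
    piece b (hax.trans hxy) hyb le_rfl fun t ht => Skernel_of_lt_of_le (hxy.trans_lt ht.1) ht.1.le]
  ring

end Kernel

theorem Ftilde_succ (P : ℕ → Polynomial ℝ) (f : ℝ → ℝ) (n : ℕ) (a b : ℝ) (k : ℕ) :
    Ftilde P f (n + 1) a b k = Ftilde P f n a b k + (-1 : ℝ) ^ k *
      ((P k).eval a * iteratedDeriv (k - 1) f a - (P k).eval b * iteratedDeriv (k - 1) f b)
        / (b - a) := by
  simp only [Ftilde]
  push_cast
  ring

theorem Ftilde_self (P : ℕ → Polynomial ℝ) (f : ℝ → ℝ) (a b : ℝ) (k : ℕ) :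
    Ftilde P f k a b k = 0 := by
  simp [Ftilde]

namespace HarmonicSeq

variable {P : ℕ → Polynomial ℝ} {f : ℝ → ℝ} {a b x : ℝ} {N : ℕ}

theorem hasDerivAt_eval_mul_iteratedDeriv (hP : HarmonicSeq P) (i : ℕ) {j : ℕ} {t : ℝ}
    (hf : ContDiffAt ℝ N f t) (hj : j < N) :
    HasDerivAt (fun t => (P (i + 1)).eval t * iteratedDeriv j f t)
      ((P i).eval t * iteratedDeriv j f t + (P (i + 1)).eval t * iteratedDeriv (j + 1) f t) t := by
  have hPi := (P (i + 1)).hasDerivAt t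
  rw [hP.2 i] at hPi
  exact hPi.mul (hf.hasDerivAt_iteratedDeriv (by exact_mod_cast hj))

theorem sum_boundary_eq (hP : HarmonicSeq P) (hab : a ≤ b)
    (hf : ∀ t ∈ Icc a b, ContDiffAt ℝ N f t) {m : ℕ} (hm : m ≤ N) :
    ∑ k ∈ Finset.Icc 1 m, (-1 : ℝ) ^ k *
        ((P k).eval a * iteratedDeriv (k - 1) f a - (P k).eval b * iteratedDeriv (k - 1) f b)
      = (∫ t in a..b, f t) - (-1 : ℝ) ^ m * ∫ t in a..b, (P m).eval t * iteratedDeriv m f t := by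
  induction m with
  | zero => simp [hP.1]
  | succ m ih =>
    have hint : ∀ k ≤ N, IntervalIntegrable (fun t => (P k).eval t * iteratedDeriv k f t)
        volume a b := fun k hk =>
      (continuousOn_eval_mul_iteratedDeriv hf hk).intervalIntegrable_of_Icc hab
    have ftc := intervalIntegral.integral_eq_sub_of_hasDerivAt
      (fun t ht => hP.hasDerivAt_eval_mul_iteratedDeriv m (hf t (uIcc_of_le hab ▸ ht)) hm)
      ((hint m (by omega)).add (hint (m + 1) hm))
    rw [intervalIntegral.integral_add (hint m (by omega)) (hint (m + 1) hm)] at ftc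
    rw [Finset.sum_Icc_succ_top (by omega), ih (by omega), Nat.add_sub_cancel]
    linear_combination (-1 : ℝ) ^ (m + 1) * ftc

theorem integral_Skernel_mul_eval_mul_iteratedDeriv_add (hP : HarmonicSeq P)
    (hax : a ≤ x) (hxm : x ≤ (a + b) / 2) (hf : ∀ t ∈ Icc a b, ContDiffAt ℝ N f t) {k : ℕ}
    (hk : k + 2 ≤ N) :
    (∫ t in a..b, Skernel a b x t * ((P k).eval t * iteratedDeriv (k + 1) f t))
        + ∫ t in a..b, Skernel a b x t * ((P (k + 1)).eval t * iteratedDeriv (k + 2) f t)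
      = (b - a) / 2 * ((P (k + 1)).eval x * iteratedDeriv (k + 1) f x
          + (P (k + 1)).eval (a + b - x) * iteratedDeriv (k + 1) f (a + b - x))
        - ∫ t in a..b, (P (k + 1)).eval t * iteratedDeriv (k + 1) f t := by
  have hab : a ≤ b := by linarith
  have hint : ∀ i {j}, j ≤ N → IntervalIntegrable
      (fun t => (P i).eval t * iteratedDeriv j f t) volume a b := fun _ _ hj =>
    (continuousOn_eval_mul_iteratedDeriv hf hj).intervalIntegrable_of_Icc hab
  rw [← intervalIntegral.integral_add ((hint k (j := k + 1) (by omega)).Skernel_mul hab)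
    ((hint (k + 1) (j := k + 2) hk).Skernel_mul hab)]
  simp only [← mul_add]
  exact integral_Skernel_mul_deriv hax hxm
    (fun t ht => hP.hasDerivAt_eval_mul_iteratedDeriv k (hf t ht) (by omega))
    ((hint k (j := k + 1) (by omega)).add (hint (k + 1) (j := k + 2) hk))

theorem quadrature_eq (hP : HarmonicSeq P) (hab : a < b) (hax : a ≤ x) (hxm : x ≤ (a + b) / 2)
    (hf : ∀ t ∈ Icc a b, ContDiffAt ℝ N f t) {m : ℕ} (hm : m < N) :
    (b - a) * ((f x + f (a + b - x)) / 2 +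
        ∑ k ∈ Finset.Icc 1 m, (Tterm P f a b x k + Ftilde P f (m + 1) a b k))
      = (m + 1) * (∫ t in a..b, f t)
        + (-1 : ℝ) ^ m
          * ∫ t in a..b, Skernel a b x t * ((P m).eval t * iteratedDeriv (m + 1) f t) := by
  induction m with
  | zero =>
    have hf' : ∀ t ∈ Icc a b, HasDerivAt f (iteratedDeriv 1 f t) t := fun t ht => by
      simpa using (hf t ht).hasDerivAt_iteratedDeriv (k := 0) (by exact_mod_cast hm)
    have hcont := continuousOn_iteratedDeriv_of_contDiffAt (k := 1) hf (by exact_mod_cast hm)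
    have hS := integral_Skernel_mul_deriv hax hxm hf' (hcont.intervalIntegrable_of_Icc hab.le)
    simp only [Finset.Icc_eq_empty_of_lt zero_lt_one, Finset.sum_empty, hP.1, Polynomial.eval_one,
      one_mul, pow_zero, Nat.cast_zero, zero_add, hS]
    ring
  | succ m ih =>
    have hstep := hP.integral_Skernel_mul_eval_mul_iteratedDeriv_add hax hxm hf (k := m) (by omega)
    have hsum := hP.sum_boundary_eq hab.le hf (m := m + 1) hm.le
    have hba : b - a ≠ 0 := by linarith
    -- Raising the order by one adds one copy of each boundary term to the `Ftilde`s, and these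
    -- boundary terms are summed by `sum_boundary_eq`.
    have hsplit : ∑ k ∈ Finset.Icc 1 (m + 1), (Tterm P f a b x k + Ftilde P f (m + 1 + 1) a b k)
        = ∑ k ∈ Finset.Icc 1 m, (Tterm P f a b x k + Ftilde P f (m + 1) a b k)
          + Tterm P f a b x (m + 1)
          + (∑ k ∈ Finset.Icc 1 (m + 1), (-1 : ℝ) ^ k * ((P k).eval a * iteratedDeriv (k - 1) f a
              - (P k).eval b * iteratedDeriv (k - 1) f b)) / (b - a) := by
      simp only [Ftilde_succ P f (m + 1) a b, ← add_assoc, Finset.sum_add_distrib, Finset.sum_div]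
      rw [Finset.sum_Icc_succ_top (by omega), Finset.sum_Icc_succ_top (by omega), Ftilde_self]
      ring
    rw [show m + 2 = m + 1 + 1 from rfl] at hstep
    rw [hsplit, hsum, Tterm, Nat.cast_succ]
    have hcancel := mul_div_cancel₀ ((∫ t in a..b, f t) - (-1 : ℝ) ^ (m + 1) *
      ∫ t in a..b, (P (m + 1)).eval t * iteratedDeriv (m + 1) f t) hba
    linear_combination ih (by omega) + (-1 : ℝ) ^ m * hstep + hcancel

theorem quadrature_sub_mean_eq (hP : HarmonicSeq P) (hab : a < b) (hax : a ≤ x)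
    (hxm : x ≤ (a + b) / 2) (hf : ∀ t ∈ Icc a b, ContDiffAt ℝ N f t) {n : ℕ} (hn : 1 ≤ n)
    (hnN : n ≤ N) :
    1 / (n : ℝ) * ((f x + f (a + b - x)) / 2 +
        ∑ k ∈ Finset.Icc 1 (n - 1), (Tterm P f a b x k + Ftilde P f n a b k))
      - 1 / (b - a) * ∫ t in a..b, f t
      = (-1 : ℝ) ^ (n - 1) / (n * (b - a))
        * ∫ t in a..b, Skernel a b x t * ((P (n - 1)).eval t * iteratedDeriv n f t) := by
  obtain ⟨m, rfl⟩ : ∃ m, n = m + 1 := ⟨n - 1, by omega⟩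
  have hQ := hP.quadrature_eq hab hax hxm hf (m := m) (by omega)
  have hba : b - a ≠ 0 := by linarith
  rw [Nat.add_sub_cancel, Nat.cast_succ]
  set I := ∫ t in a..b, Skernel a b x t * ((P m).eval t * iteratedDeriv (m + 1) f t)
  field_simp
  linear_combination 2 * hQ

end HarmonicSeq

theorem abs_integral_Skernel_mul_le {a b x : ℝ} (hab : a ≤ b) {φ : ℝ → ℝ}
    (hφ : IntervalIntegrable φ volume a b) :
    |∫ t in a..b, Skernel a b x t * φ t|
      ≤ ((b - a) / 4 + |x - (3 * a + b) / 4|) * ∫ t in Icc a b, |φ t| := by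
  rw [integral_Icc_eq_integral_Ioc, ← intervalIntegral.integral_of_le hab,
    ← intervalIntegral.integral_const_mul]
  refine (intervalIntegral.abs_integral_le_integral_abs hab).trans
    (intervalIntegral.integral_mono_on hab (hφ.Skernel_mul hab).abs (hφ.abs.const_mul _)
      fun t ht => ?_)
  rw [abs_mul]
  exact mul_le_mul_of_nonneg_right (abs_Skernel_le ht) (abs_nonneg _)

theorem abs_integral_Skernel_mul_le_eLpNorm_mul_eLpNorm {a b x : ℝ} (hab : a ≤ b)
    {p q : ℝ≥0∞} [p.HolderConjugate q] {g h : ℝ → ℝ} (hg : ContinuousOn g (Icc a b))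
    (hh : ContinuousOn h (Icc a b)) :
    |∫ t in a..b, Skernel a b x t * (g t * h t)|
      ≤ ((b - a) / 4 + |x - (3 * a + b) / 4|) * ((eLpNorm g p (volume.restrict (Icc a b))).toReal
        * (eLpNorm h q (volume.restrict (Icc a b))).toReal) :=
  (abs_integral_Skernel_mul_le hab ((hg.mul hh).intervalIntegrable_of_Icc hab)).trans <|
    mul_le_mul_of_nonneg_left
      (integral_abs_mul_le_eLpNorm_mul_eLpNorm (hg.memLp_restrict_of_isCompact isCompact_Icc)
        (hh.memLp_restrict_of_isCompact isCompact_Icc)) (by positivity)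

theorem stmt_15_general (n : ℕ) (hn : 1 ≤ n) (P : ℕ → Polynomial ℝ) (hP : HarmonicSeq P)
    (p q : ℝ≥0∞) (hpq : p.HolderConjugate q)
    (a b c d : ℝ) (hab : a < b) (hca : c < a) (hbd : b < d) (f : ℝ → ℝ)
    (hf : ContDiffOn ℝ (n : ℕ∞) f (Set.Ioo c d))
    (x : ℝ) (hx : x ∈ Set.Icc a ((a + b) / 2)) :
    |(1 / (n : ℝ)) *
          ((f x + f (a + b - x)) / 2 +
            ∑ k ∈ Finset.Icc 1 (n - 1), (Tterm P f a b x k + Ftilde P f n a b k))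
        - (1 / (b - a)) * ∫ y in a..b, f y|
      ≤ (1 / (n : ℝ)) * (1 / 4 + |x - (3 * a + b) / 4| / (b - a)) *
          (eLpNorm (fun t => (P (n - 1)).eval t) q
              (MeasureTheory.volume.restrict (Set.Icc a b))).toReal *
          (eLpNorm (iteratedDeriv n f) p
              (MeasureTheory.volume.restrict (Set.Icc a b))).toReal := by
  have hfC : ∀ t ∈ Icc a b, ContDiffAt ℝ n f t := fun t ht =>
    hf.contDiffAt (Ioo_mem_nhds (hca.trans_le ht.1) (ht.2.trans_lt hbd))
  have hbound := abs_integral_Skernel_mul_le_eLpNorm_mul_eLpNorm (x := x) (p := q) (q := p) hab.le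
    (P (n - 1)).continuous.continuousOn (continuousOn_iteratedDeriv_of_contDiffAt hfC le_rfl)
  have hba : 0 < b - a := sub_pos.2 hab
  have hpos : (0 : ℝ) < n * (b - a) := mul_pos (by exact_mod_cast hn) hba
  rw [hP.quadrature_sub_mean_eq hab hx.1 hx.2 hfC hn le_rfl, abs_mul, abs_div, abs_pow, abs_neg,
    abs_one, one_pow, abs_of_pos hpos]
  calc 1 / (n * (b - a))
        * |∫ t in a..b, Skernel a b x t * ((P (n - 1)).eval t * iteratedDeriv n f t)|
      ≤ 1 / (n * (b - a)) * (((b - a) / 4 + |x - (3 * a + b) / 4|) * _) := by gcongr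
    _ = _ := by
      field_simp

theorem stmt_15 (n : ℕ) (hn : 1 ≤ n) (P : ℕ → Polynomial ℝ) (hP : HarmonicSeq P)
    (p q : ℝ≥0∞) (hpq : p.HolderConjugate q)
    (a b c d : ℝ) (hab : a < b) (hca : c < a) (hbd : b < d) (f : ℝ → ℝ)
    (hf : ContDiffOn ℝ (n : ℕ∞) f (Set.Ioo c d))
    (hAC : AbsCont (iteratedDeriv n f) a b)
    (hLp : MemLp (iteratedDeriv n f) p (MeasureTheory.volume.restrict (Set.Icc a b)))
    (x : ℝ) (hx : x ∈ Set.Icc a ((a + b) / 2)) :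
    |(1 / (n : ℝ)) *
          ((f x + f (a + b - x)) / 2 +
            ∑ k ∈ Finset.Icc 1 (n - 1), (Tterm P f a b x k + Ftilde P f n a b k))
        - (1 / (b - a)) * ∫ y in a..b, f y|
      ≤ (1 / (n : ℝ)) * (1 / 4 + |x - (3 * a + b) / 4| / (b - a)) *
          (eLpNorm (fun t => (P (n - 1)).eval t) q
              (MeasureTheory.volume.restrict (Set.Icc a b))).toReal *
          (eLpNorm (iteratedDeriv n f) p
              (MeasureTheory.volume.restrict (Set.Icc a b))).toReal :=
  stmt_15_general n hn P hP p q hpq a b c d hab hca hbd f hf x hx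
end
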